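/- arXiv:2501.18744 — 5 statements merged into one kernel-verified Lean document; each statement's English description precedes it below -/
import Mathlib

section
/- For any sequence of real numbers $r(1), r(2), \dots$ and any $n \ge 1$: $n \sum_{\lambda \vdash n} \frac{(-1)^{\ell(\lambda)-1}(\ell(\lambda)-1)! \prod_i r(i)^{m_i(\lambda)}}{\prod_i m_i(\lambda)!} = \sum_{j=1}^{n} j\, r(j) \sum_{\mu \vdash n-j} \frac{(-1)^{\ell(\mu)} \ell(\mu)! \prod_i r(i)^{m_i(\mu)}}{\prod_i m_i(\mu)!}$. -/
open Finset

namespace Stmt4Aux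

/-- The weight of a partition appearing on the LHS. -/
noncomputable def F (r : ℕ → ℝ) (n : ℕ) (p : Nat.Partition n) : ℝ :=
  ((-1 : ℝ) ^ (p.parts.card - 1) * (Nat.factorial (p.parts.card - 1)) *
      ∏ i ∈ Finset.Icc 1 n, (r i) ^ (p.parts.count i)) /
    ∏ i ∈ Finset.Icc 1 n, (Nat.factorial (p.parts.count i) : ℝ)

/-- Insert a part `j` into a partition of `n - j`. -/
def insertPart {n : ℕ} (j : ℕ) (hj : 1 ≤ j) (hjn : j ≤ n)
    (μ : Nat.Partition (n - j)) : Nat.Partition n where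
  parts := j ::ₘ μ.parts
  parts_pos := by
    intro i hi
    rcases Multiset.mem_cons.mp hi with h | h
    · omega
    · exact μ.parts_pos h
  parts_sum := by
    have := μ.parts_sum
    simp only [Multiset.sum_cons, this]
    omega

lemma mem_Icc_of_mem_parts {n : ℕ} (p : Nat.Partition n) {j : ℕ}
    (hj : j ∈ p.parts) : j ∈ Finset.Icc 1 n := by
  have h1 : 0 < j := p.parts_pos hj
  have h2 : j ≤ p.parts.sum :=
    Multiset.single_le_sum (fun x _ => Nat.zero_le x) j hj
  rw [p.parts_sum] at h2
  simp only [Finset.mem_Icc]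
  omega

lemma sum_reindex {n : ℕ} (j : ℕ) (hj : 1 ≤ j) (hjn : j ≤ n)
    (G : Nat.Partition n → ℝ) :
    ∑ μ : Nat.Partition (n - j), G (insertPart j hj hjn μ)
      = ∑ p ∈ Finset.univ.filter (fun p : Nat.Partition n => j ∈ p.parts), G p := by
  refine Finset.sum_bij (fun μ _ => insertPart j hj hjn μ) ?_ ?_ ?_ ?_
  · intro μ _
    simp only [Finset.mem_filter, Finset.mem_univ, true_and]
    exact Multiset.mem_cons_self j μ.parts
  · intro μ₁ _ μ₂ _ h
    have h2 := congrArg Nat.Partition.parts h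
    simp only [insertPart] at h2
    exact Nat.Partition.ext ((Multiset.cons_inj_right j).mp h2)
  · intro p hp
    simp only [Finset.mem_filter, Finset.mem_univ, true_and] at hp
    refine ⟨⟨p.parts.erase j, ?_, ?_⟩, Finset.mem_univ _, ?_⟩
    · intro i hi
      exact p.parts_pos (Multiset.mem_of_mem_erase hi)
    · have hc : j ::ₘ p.parts.erase j = p.parts := Multiset.cons_erase hp
      have := congrArg Multiset.sum hc
      simp only [Multiset.sum_cons, p.parts_sum] at this
      omega
    · apply Nat.Partition.ext
      simpa only [insertPart] using Multiset.cons_erase hp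
  · intro μ _
    rfl

lemma count_eq_zero_of_one {n : ℕ} (p : Nat.Partition n) :
    p.parts.count 0 = 0 := by
  rw [Multiset.count_eq_zero]
  intro h
  exact absurd (p.parts_pos h) (lt_irrefl 0)

end Stmt4Aux

open Stmt4Aux in
theorem stmt4 (r : ℕ → ℝ) (n : ℕ) (hn : 1 ≤ n) :
    (n : ℝ) * ∑ p : Nat.Partition n,
        ((-1 : ℝ) ^ (p.parts.card - 1) * (Nat.factorial (p.parts.card - 1)) *
          ∏ i ∈ Finset.Icc 1 n, (r i) ^ (p.parts.count i)) /
        ∏ i ∈ Finset.Icc 1 n, (Nat.factorial (p.parts.count i) : ℝ)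
    = ∑ j ∈ Finset.Icc 1 n, (j : ℝ) * r j *
        ∑ q : Nat.Partition (n - j),
          ((-1 : ℝ) ^ q.parts.card * (Nat.factorial q.parts.card) *
            ∏ i ∈ Finset.Icc 1 n, (r i) ^ (q.parts.count i)) /
          ∏ i ∈ Finset.Icc 1 n, (Nat.factorial (q.parts.count i) : ℝ) := by
  -- rewrite RHS
  have key : ∀ j ∈ Finset.Icc 1 n,
      (j : ℝ) * r j *
        ∑ q : Nat.Partition (n - j),
          ((-1 : ℝ) ^ q.parts.card * (Nat.factorial q.parts.card) *
            ∏ i ∈ Finset.Icc 1 n, (r i) ^ (q.parts.count i)) /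
          ∏ i ∈ Finset.Icc 1 n, (Nat.factorial (q.parts.count i) : ℝ)
      = ∑ p ∈ Finset.univ.filter (fun p : Nat.Partition n => j ∈ p.parts),
          (j : ℝ) * (p.parts.count j : ℝ) * F r n p := by
    intro j hj
    rw [Finset.mem_Icc] at hj
    obtain ⟨hj1, hjn⟩ := hj
    rw [← sum_reindex j hj1 hjn, Finset.mul_sum]
    apply Finset.sum_congr rfl
    intro μ _
    -- unfold everything about the inserted partition
    have hparts : (insertPart j hj1 hjn μ).parts = j ::ₘ μ.parts := rfl
    have hcount : ∀ i, (insertPart j hj1 hjn μ).parts.count i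
        = μ.parts.count i + if i = j then 1 else 0 := by
      intro i
      rw [hparts, Multiset.count_cons]
    have hjIcc : j ∈ Finset.Icc 1 n := Finset.mem_Icc.mpr ⟨hj1, hjn⟩
    have hcard : (insertPart j hj1 hjn μ).parts.card - 1 = μ.parts.card := by
      rw [hparts, Multiset.card_cons]; omega
    set c := μ.parts.count j with hc
    -- the numerator product
    have hP : ∏ i ∈ Finset.Icc 1 n, (r i) ^ ((insertPart j hj1 hjn μ).parts.count i)
        = r j * ∏ i ∈ Finset.Icc 1 n, (r i) ^ (μ.parts.count i) := by
      rw [← Finset.mul_prod_erase _ _ hjIcc, ← Finset.mul_prod_erase _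
        (fun i => (r i) ^ (μ.parts.count i)) hjIcc]
      have he : ∀ i ∈ (Finset.Icc 1 n).erase j,
          (r i) ^ ((insertPart j hj1 hjn μ).parts.count i) = (r i) ^ (μ.parts.count i) := by
        intro i hi
        rw [hcount i, if_neg (Finset.ne_of_mem_erase hi), add_zero]
      rw [Finset.prod_congr rfl he, hcount j, if_pos rfl, pow_succ]
      ring
    -- the denominator product
    have hQ : ∏ i ∈ Finset.Icc 1 n, (Nat.factorial ((insertPart j hj1 hjn μ).parts.count i) : ℝ)
        = ((c : ℝ) + 1) * ∏ i ∈ Finset.Icc 1 n, (Nat.factorial (μ.parts.count i) : ℝ) := by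
      rw [← Finset.mul_prod_erase _ _ hjIcc, ← Finset.mul_prod_erase _
        (fun i => (Nat.factorial (μ.parts.count i) : ℝ)) hjIcc]
      have h1 : ∀ i ∈ (Finset.Icc 1 n).erase j,
          (Nat.factorial ((insertPart j hj1 hjn μ).parts.count i) : ℝ)
            = (Nat.factorial (μ.parts.count i) : ℝ) := by
        intro i hi
        rw [hcount i, if_neg (Finset.ne_of_mem_erase hi), add_zero]
      rw [Finset.prod_congr rfl h1, hcount j, if_pos rfl, Nat.factorial_succ]
      push_cast
      ring
    have hcj : ((insertPart j hj1 hjn μ).parts.count j : ℝ) = (c : ℝ) + 1 := by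
      rw [hcount j, if_pos rfl]; push_cast; ring
    rw [F, hcard, hP, hQ, hcj]
    have hD : (∏ i ∈ Finset.Icc 1 n, (Nat.factorial (μ.parts.count i) : ℝ)) ≠ 0 := by
      apply Finset.prod_ne_zero_iff.mpr
      intro i _
      exact_mod_cast Nat.factorial_ne_zero _
    have hc1 : ((c : ℝ) + 1) ≠ 0 := by positivity
    field_simp
  rw [Finset.sum_congr rfl key]
  -- swap the sums
  have hswap : ∑ j ∈ Finset.Icc 1 n,
      ∑ p ∈ Finset.univ.filter (fun p : Nat.Partition n => j ∈ p.parts),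
        (j : ℝ) * (p.parts.count j : ℝ) * F r n p
      = ∑ p : Nat.Partition n, ∑ j ∈ p.parts.toFinset,
          (j : ℝ) * (p.parts.count j : ℝ) * F r n p := by
    simp only [Finset.sum_filter]
    rw [Finset.sum_comm]
    apply Finset.sum_congr rfl
    intro p _
    rw [← Finset.sum_filter]
    congr 1
    ext j
    simp only [Finset.mem_filter, Multiset.mem_toFinset]
    constructor
    · rintro ⟨_, h⟩; exact h
    · intro h; exact ⟨mem_Icc_of_mem_parts p h, h⟩
  rw [hswap]
  rw [Finset.mul_sum]
  apply Finset.sum_congr rfl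
  intro p _
  have hsum : ∑ j ∈ p.parts.toFinset, (j : ℝ) * (p.parts.count j : ℝ) = (n : ℝ) := by
    have : ∑ j ∈ p.parts.toFinset, j * p.parts.count j = n := by
      have h := Finset.sum_multiset_map_count p.parts (fun x => x)
      simp only [Multiset.map_id', smul_eq_mul] at h
      rw [p.parts_sum] at h
      exact (Finset.sum_congr rfl fun x _ => Nat.mul_comm _ _).trans h.symm
    calc ∑ j ∈ p.parts.toFinset, (j : ℝ) * (p.parts.count j : ℝ)
        = ((∑ j ∈ p.parts.toFinset, j * p.parts.count j : ℕ) : ℝ) := by push_cast; ring_nf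
      _ = (n : ℝ) := by rw [this]
  calc (n : ℝ) * (((-1 : ℝ) ^ (p.parts.card - 1) * (Nat.factorial (p.parts.card - 1)) *
          ∏ i ∈ Finset.Icc 1 n, (r i) ^ (p.parts.count i)) /
        ∏ i ∈ Finset.Icc 1 n, (Nat.factorial (p.parts.count i) : ℝ))
      = (n : ℝ) * F r n p := rfl
    _ = (∑ j ∈ p.parts.toFinset, (j : ℝ) * (p.parts.count j : ℝ)) * F r n p := by rw [hsum]
    _ = ∑ j ∈ p.parts.toFinset, (j : ℝ) * (p.parts.count j : ℝ) * F r n p := by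
        rw [Finset.sum_mul]
end

section
/- If $f(q) = 1 + \sum_{n\ge 1} r(n) q^n$ is a formal power series with unit constant term, then $1/f(q) = \sum_{k \ge 0} \left( \sum_{\lambda \vdash k} \frac{(-1)^{\ell(\lambda)} \ell(\lambda)! \prod_i r(i)^{m_i(\lambda)}}{\prod_i m_i(\lambda)!} \right) q^k$. -/
/-!
Write `W(λ)` for the summand of `λ ⊢ k` and `a k` for the coefficient sum. Removing one part `n`
from `λ` leaves a partition `μ ⊢ k - n` with `(m_n(λ) / ℓ(λ)) W(λ) = -r(n) W(μ)`, and every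
`μ ⊢ k - n` arises exactly once this way. Since `∑ₙ m_n(λ) = ℓ(λ)`, summing over `n` and `λ`
gives `a k = -∑_{n=1}^{k} r(n) a(k - n)` for `k ≥ 1`, while `a 0 = 1`: this says `f · ∑ a k qᵏ = 1`.
-/

open Finset PowerSeries

section Multiset

variable {α : Type*} [DecidableEq α]

theorem Finset.prod_count_eq_of_subset {M : Type*} [CommMonoid M] (g : α → ℕ → M)
    (hg : ∀ i, g i 0 = 1) {s : Multiset α} {T T' : Finset α} (hs : s.toFinset ⊆ T)
    (hT : T ⊆ T') : ∏ i ∈ T', g i (s.count i) = ∏ i ∈ T, g i (s.count i) := by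
  refine (prod_subset hT fun i _ hi => ?_).symm
  rw [Multiset.count_eq_zero_of_notMem fun h => hi (hs (Multiset.mem_toFinset.2 h)), hg]

theorem Finset.prod_pow_count_cons {M : Type*} [CommMonoid M] (f : α → M) {T : Finset α}
    {a : α} (ha : a ∈ T) (s : Multiset α) :
    ∏ i ∈ T, f i ^ (a ::ₘ s).count i = f a * ∏ i ∈ T, f i ^ s.count i := by
  simp only [Multiset.count_cons, pow_add, prod_mul_distrib, pow_ite, pow_one, pow_zero,
    prod_ite_eq' T a, if_pos ha, mul_comm]

theorem Finset.prod_factorial_count_cons {T : Finset α} {a : α} (ha : a ∈ T)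
    (s : Multiset α) :
    ∏ i ∈ T, ((a ::ₘ s).count i).factorial
      = (s.count a + 1) * ∏ i ∈ T, (s.count i).factorial := by
  rw [← mul_prod_erase T _ ha, ← mul_prod_erase T (fun i => (s.count i).factorial) ha,
    Multiset.count_cons_self, Nat.factorial_succ, mul_assoc]
  congr 2
  exact prod_congr rfl fun i hi => by rw [Multiset.count_cons_of_ne (ne_of_mem_erase hi)]

variable {K : Type*} [Field K]

/-- `T` is any finset containing the elements of `s`; for partitions of `k` take `T = Icc 1 k`. -/
noncomputable def partitionTerm (r : α → K) (T : Finset α) (s : Multiset α) : K :=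
  (-1) ^ s.card * (s.card.factorial : K) * (∏ i ∈ T, r i ^ s.count i) /
    ∏ i ∈ T, ((s.count i).factorial : K)

theorem partitionTerm_eq_of_subset (r : α → K) {s : Multiset α} {T T' : Finset α}
    (hs : s.toFinset ⊆ T) (hT : T ⊆ T') : partitionTerm r T' s = partitionTerm r T s := by
  have hnum := prod_count_eq_of_subset (fun i m => r i ^ m) (fun _ => pow_zero _) hs hT
  have hden := prod_count_eq_of_subset (fun _ m => (m.factorial : K)) (fun _ => by simp) hs hT
  rw [partitionTerm, partitionTerm, hnum, hden]

theorem count_div_card_mul_partitionTerm_cons [CharZero K] (r : α → K) {T : Finset α} {a : α}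
    (ha : a ∈ T) (s : Multiset α) :
    ((a ::ₘ s).count a / (a ::ₘ s).card : K) * partitionTerm r T (a ::ₘ s)
      = -r a * partitionTerm r T s := by
  have hden : ∏ i ∈ T, ((s.count i).factorial : K) ≠ 0 :=
    prod_ne_zero_iff.2 fun i _ => Nat.cast_ne_zero.2 (Nat.factorial_ne_zero _)
  rw [partitionTerm, partitionTerm, prod_pow_count_cons r ha, ← Nat.cast_prod,
    prod_factorial_count_cons ha, Multiset.count_cons_self, Multiset.card_cons,
    Nat.factorial_succ]
  push_cast
  field_simp
  ring

end Multiset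

namespace Nat.Partition

theorem toFinset_parts_subset_Icc {k : ℕ} (p : k.Partition) : p.parts.toFinset ⊆ Icc 1 k :=
  fun i hi => by
    rw [Multiset.mem_toFinset] at hi
    exact mem_Icc.2 ⟨p.parts_pos hi, p.le_of_mem_parts hi⟩

theorem card_parts_ne_zero {k : ℕ} (hk : k ≠ 0) (p : k.Partition) : p.parts.card ≠ 0 := by
  intro h
  rw [← p.parts_sum, Multiset.card_eq_zero.1 h, Multiset.sum_zero] at hk
  exact hk rfl

theorem sum_filter_mem_parts {M : Type*} [AddCommMonoid M] {k n : ℕ} (hn : 1 ≤ n) (hnk : n ≤ k)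
    (F : Multiset ℕ → M) :
    ∑ p : k.Partition with n ∈ p.parts, F p.parts = ∑ μ : (k - n).Partition, F (n ::ₘ μ.parts) := by
  rw [sum_subtype _ fun _ => mem_filter_univ _]
  exact Fintype.sum_equiv (partitionWithPartEquiv hn hnk) _ _ fun p => by
    rw [← partitionWithPartEquiv_symm_apply_parts hn hnk, Equiv.symm_apply_apply]

end Nat.Partition

section PartitionSum

variable {K : Type*} [Field K]

noncomputable def partitionSum (r : ℕ → K) (k : ℕ) : K :=
  ∑ p : k.Partition, partitionTerm r (Icc 1 k) p.parts

theorem partitionSum_zero (r : ℕ → K) : partitionSum r 0 = 1 := by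
  simp [partitionSum, partitionTerm, Nat.Partition.partition_zero_parts]

variable [CharZero K]

theorem sum_count_div_card_mul_partitionTerm (r : ℕ → K) {k n : ℕ} (hn : 1 ≤ n) (hnk : n ≤ k) :
    ∑ p : k.Partition, (p.parts.count n / p.parts.card : K) * partitionTerm r (Icc 1 k) p.parts
      = -r n * partitionSum r (k - n) := by
  rw [← sum_filter_of_ne (p := fun p : k.Partition => n ∈ p.parts) fun p _ h => ?_,
    Nat.Partition.sum_filter_mem_parts hn hnk
      (fun s => (s.count n / s.card : K) * partitionTerm r (Icc 1 k) s),
    partitionSum, mul_sum]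
  · refine sum_congr rfl fun μ _ => ?_
    rw [count_div_card_mul_partitionTerm_cons r (mem_Icc.2 ⟨hn, hnk⟩),
      partitionTerm_eq_of_subset r μ.toFinset_parts_subset_Icc
        (Icc_subset_Icc_right (k.sub_le n))]
  · by_contra hnp
    rw [Multiset.count_eq_zero_of_notMem hnp, Nat.cast_zero, zero_div, zero_mul] at h
    exact h rfl

theorem partitionSum_eq_neg_sum (r : ℕ → K) {k : ℕ} (hk : k ≠ 0) :
    partitionSum r k = -∑ n ∈ Icc 1 k, r n * partitionSum r (k - n) := by
  have hsplit (p : k.Partition) : partitionTerm r (Icc 1 k) p.parts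
      = ∑ n ∈ Icc 1 k, (p.parts.count n / p.parts.card : K) * partitionTerm r (Icc 1 k) p.parts := by
    rw [← sum_mul, ← sum_div, ← Nat.cast_sum, Multiset.sum_count_eq_card fun _ ha =>
        p.toFinset_parts_subset_Icc (Multiset.mem_toFinset.2 ha),
      div_self (Nat.cast_ne_zero.2 (p.card_parts_ne_zero hk)), one_mul]
  rw [partitionSum, sum_congr rfl fun p _ => hsplit p, sum_comm, ← sum_neg_distrib]
  refine sum_congr rfl fun n hn => ?_
  rw [sum_count_div_card_mul_partitionTerm r (mem_Icc.1 hn).1 (mem_Icc.1 hn).2, neg_mul]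

theorem mk_mul_mk_partitionSum (r : ℕ → K) :
    mk (fun n => if n = 0 then 1 else r n) * mk (partitionSum r) = 1 := by
  ext (_ | k)
  · simp [partitionSum_zero]
  · rw [coeff_mul, Finset.Nat.sum_antidiagonal_succ, Finset.Nat.sum_antidiagonal_eq_sum_range_succ
      (fun i j => coeff (i + 1) (mk _) * coeff j (mk (partitionSum r)))]
    simp only [coeff_mk, coeff_one, if_pos, one_mul, add_eq_zero_iff_eq_neg, k.succ_ne_zero,
      if_false]
    rw [partitionSum_eq_neg_sum r k.succ_ne_zero, ← Ico_add_one_right_eq_Icc, sum_Ico_eq_sum_range]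
    simp [add_comm 1]

end PartitionSum

theorem stmt5 (r : ℕ → ℝ)
    (f : PowerSeries ℝ) (hf : f = PowerSeries.mk fun n => if n = 0 then 1 else r n) :
    f⁻¹ = PowerSeries.mk fun k =>
      ∑ p : Nat.Partition k,
        ((-1 : ℝ) ^ p.parts.card * (Nat.factorial p.parts.card) *
          ∏ i ∈ Finset.Icc 1 k, (r i) ^ (p.parts.count i)) /
        ∏ i ∈ Finset.Icc 1 k, (Nat.factorial (p.parts.count i) : ℝ) := by
  subst hf
  rw [PowerSeries.inv_eq_iff_mul_eq_one (by simp), mul_comm]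
  exact mk_mul_mk_partitionSum r
end

section
/- Let $\overline{p}(n)$ denote the number of overpartitions of $n$, satisfying $\sum_{n\ge 0} \overline{p}(n) q^n = \prod_{n\ge 1} \frac{1+q^n}{1-q^n}$. Then $\overline{p}(n) = \sum_{\lambda \vdash n} (m_1(\lambda)+1)(m_3(\lambda)+1)(m_5(\lambda)+1)\cdots$, the product running over odd indices. -/
/-!
Since `(1 + q^i) / (1 - q^i) = (1 - q^(2i)) / (1 - q^i)^2` and `∏_{i ≤ n} (1 - q^(2i))` is the
product of `1 - q^j` over the even `j ≤ 2n`, the overpartition product agrees up to order `n`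
with `∏_{i ≤ 2n} (1 - q^i)^(-e_i)`, where `e_i = 2` for odd `i` and `e_i = 1` for even `i`.
Expanding `(1 - q^i)^(-2) = ∑_c (c + 1) q^(ic)` and `(1 - q^i)^(-1) = ∑_c q^(ic)`, this is the
partition generating function `Nat.Partition.genFun` with weight `m_i + 1` on each odd part `i`.
-/

open Finset PowerSeries
open scoped PowerSeries.WithPiTopology

theorem Finset.filter_even_Icc_one_two_mul (n : ℕ) :
    (Icc 1 (2 * n)).filter Even = (Icc 1 n).image (2 * ·) := by
  ext i
  simp only [mem_filter, mem_Icc, mem_image, Nat.even_iff]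
  constructor
  · rintro ⟨⟨h1, h2⟩, h3⟩
    exact ⟨i / 2, ⟨by omega, by omega⟩, by omega⟩
  · rintro ⟨j, ⟨hj1, hj2⟩, rfl⟩
    omega

namespace PowerSeries

variable {R : Type*} [CommRing R]

theorem coeff_eq_of_sModEq {f g : R⟦X⟧} {n : ℕ}
    (h : f ≡ g [SMOD Ideal.span {(X : R⟦X⟧) ^ (n + 1)}]) : coeff n f = coeff n g := by
  rw [SModEq.sub_mem, Ideal.mem_span_singleton] at h
  rw [← sub_eq_zero, ← map_sub]
  exact X_pow_dvd_iff.mp h n n.lt_succ_self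

theorem coeff_prod_eq_of_subset {ι : Type*} [DecidableEq ι] {s t : Finset ι} {F : ι → R⟦X⟧}
    {n : ℕ} (hst : s ⊆ t) (hF : ∀ i ∈ t \ s, F i ≡ 1 [SMOD Ideal.span {(X : R⟦X⟧) ^ (n + 1)}]) :
    coeff n (∏ i ∈ t, F i) = coeff n (∏ i ∈ s, F i) := by
  rw [← prod_sdiff hst]
  apply coeff_eq_of_sModEq
  simpa using (SModEq.prod hF).mul (SModEq.refl (∏ i ∈ s, F i))

variable {K : Type*} [Field K]

theorem expand_mk_one {i : ℕ} (hi : i ≠ 0) :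
    expand i hi (mk 1 : K⟦X⟧) = (1 - X ^ i)⁻¹ := by
  rw [PowerSeries.eq_inv_iff_mul_eq_one (by simp [hi]), ← expand_X i hi, ← map_one (expand i hi),
    ← map_sub, ← map_mul, mk_one_mul_one_sub_eq_one, map_one]

theorem one_sub_X_pow_mul_inv {i : ℕ} (hi : i ≠ 0) : (1 - X ^ i : K⟦X⟧) * (1 - X ^ i)⁻¹ = 1 :=
  PowerSeries.mul_inv_cancel _ (by simp [hi])

theorem inv_one_sub_X_pow_sModEq_one {i n : ℕ} (hi : n < i) :
    (1 - X ^ i : K⟦X⟧)⁻¹ ≡ 1 [SMOD Ideal.span {(X : K⟦X⟧) ^ (n + 1)}] := by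
  have hinv := one_sub_X_pow_mul_inv (K := K) (i := i) (by omega)
  rw [SModEq.sub_mem, Ideal.mem_span_singleton]
  exact ⟨X ^ (i - (n + 1)) * (1 - X ^ i)⁻¹, by
    rw [← mul_assoc, ← pow_add, Nat.add_sub_cancel' hi]
    linear_combination hinv⟩

end PowerSeries

namespace Nat.Partition

variable {R : Type*} [CommRing R]

noncomputable def genFunFactor (f : ℕ → ℕ → R) (i : ℕ) : R⟦X⟧ :=
  PowerSeries.mk fun k => if i ∣ k then f i (k / i) else 0

theorem genFunFactor_eq_expand (f : ℕ → ℕ → R) {i : ℕ} (hi : i ≠ 0) :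
    genFunFactor f i = expand i hi (PowerSeries.mk (f i)) := by
  ext k
  simp [genFunFactor, coeff_expand]

theorem genFunFactor_sModEq_one {f : ℕ → ℕ → R} {i n : ℕ} (hf : f i 0 = 1) (hi : n < i) :
    genFunFactor f i ≡ 1 [SMOD Ideal.span {(X : R⟦X⟧) ^ (n + 1)}] := by
  rw [SModEq.sub_mem, Ideal.mem_span_singleton, X_pow_dvd_iff]
  intro k hk
  rcases eq_or_ne k 0 with rfl | hk0
  · simp [genFunFactor, hf]
  · have hik : ¬ i ∣ k := fun h => hk0 (Nat.eq_zero_of_dvd_of_lt h (by omega))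
    simp [genFunFactor, hik, hk0]

theorem one_add_tsum_eq_genFunFactor [TopologicalSpace R] [T2Space R] (f : ℕ → ℕ → R)
    {i : ℕ} (hf : f i 0 = 1) (hi : i ≠ 0) :
    1 + ∑' j, f i (j + 1) • (X : R⟦X⟧) ^ (i * (j + 1)) = genFunFactor f i := by
  ext k
  rw [map_add, (summable_genFun_term' f hi).map_tsum _ (WithPiTopology.continuous_coeff _ _)]
  simp only [map_smul, coeff_X_pow, coeff_one, genFunFactor, coeff_mk, smul_eq_mul, mul_ite,
    mul_one, mul_zero]
  rcases em (i ∣ k) with ⟨m, rfl⟩ | hik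
  · rw [if_pos (dvd_mul_right i m), Nat.mul_div_cancel_left m (Nat.pos_of_ne_zero hi)]
    cases m with
    | zero => simp [hf, hi]
    | succ m =>
      rw [if_neg (by positivity), zero_add, tsum_eq_single m fun j hj => if_neg ?_, if_pos rfl]
      intro h
      exact hj (by simpa [hi] using h.symm)
  · have hk : k ≠ 0 := by rintro rfl; exact hik (dvd_zero i)
    simp only [if_neg hk, if_neg hik, zero_add]
    exact (tsum_congr fun j => if_neg fun h => hik ⟨j + 1, h⟩).trans tsum_zero

theorem coeff_prod_genFunFactor_eq_of_subset {f : ℕ → ℕ → R} (hf : ∀ i, f i 0 = 1) {n : ℕ}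
    {s : Finset ℕ} (hs : Icc 1 n ⊆ s) (hs0 : 0 ∉ s) :
    coeff n (∏ i ∈ s, genFunFactor f i) = coeff n (∏ i ∈ Icc 1 n, genFunFactor f i) := by
  refine coeff_prod_eq_of_subset hs fun i hi => genFunFactor_sModEq_one (hf i) ?_
  obtain ⟨his, hin⟩ := mem_sdiff.mp hi
  have hi0 : i ≠ 0 := by rintro rfl; exact hs0 his
  simp only [mem_Icc, not_and, not_le] at hin
  omega

theorem coeff_genFun_eq_coeff_prod {f : ℕ → ℕ → R} (hf : ∀ i, f i 0 = 1) (n : ℕ) :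
    coeff n (genFun f) = coeff n (∏ i ∈ Icc 1 n, genFunFactor f i) := by
  -- Any T2 topology on `R` gives access to `hasProd_genFun`, read off here coefficientwise.
  let _ : TopologicalSpace R := ⊥
  have _ : DiscreteTopology R := ⟨rfl⟩
  have hprod : HasProd (fun i => genFunFactor f (i + 1)) (genFun f) := by
    simpa only [one_add_tsum_eq_genFunFactor f (hf _) (Nat.succ_ne_zero _)] using hasProd_genFun f
  refine tendsto_nhds_unique (((WithPiTopology.continuous_coeff R n).tendsto _).comp hprod)
    (tendsto_const_nhds.congr' ?_)
  filter_upwards [Filter.eventually_ge_atTop (range n)] with t ht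
  rw [Function.comp_apply, ← coeff_prod_genFunFactor_eq_of_subset hf
    (s := t.map (addRightEmbedding 1)) (fun i hi => ?_) (by simp), prod_map]
  · rfl
  simp only [mem_map, addRightEmbedding_apply]
  simp only [mem_Icc] at hi
  exact ⟨i - 1, ht (mem_range.mpr (by omega)), by omega⟩

def oddMultiplicityWeight (K : Type*) [Semiring K] (i c : ℕ) : K :=
  if Odd i then c + 1 else 1

theorem coeff_genFun_oddMultiplicityWeight (K : Type*) [CommSemiring K] (n : ℕ) :
    coeff n (genFun (oddMultiplicityWeight K)) =
      ∑ p : n.Partition, ∏ i ∈ (Icc 1 n).filter Odd, ((p.parts.count i : K) + 1) := by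
  rw [coeff_genFun]
  refine sum_congr rfl fun p _ => ?_
  rw [prod_filter, Finsupp.prod, Multiset.toFinsupp_support]
  refine prod_subset (fun i hi => ?_) (fun i _ hi => ?_) |>.trans (prod_congr rfl fun i _ => ?_)
  · rw [Multiset.mem_toFinset] at hi
    exact mem_Icc.mpr ⟨p.parts_pos hi, le_of_mem_parts hi⟩
  · simp [oddMultiplicityWeight, Multiset.count_eq_zero.mpr (by simpa using hi)]
  · simp [oddMultiplicityWeight]

theorem mk_oddMultiplicityWeight (K : Type*) [CommRing K] (i : ℕ) :
    PowerSeries.mk (oddMultiplicityWeight K i) = PowerSeries.mk 1 ^ (if Odd i then 2 else 1) := by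
  split_ifs with hi
  · ext c
    simp [oddMultiplicityWeight, hi, mk_one_pow_eq_mk_choose_add K 1, add_comm]
  · ext c
    simp [oddMultiplicityWeight, hi]

theorem genFunFactor_oddMultiplicityWeight (K : Type*) [Field K] {i : ℕ} (hi : i ≠ 0) :
    genFunFactor (oddMultiplicityWeight K) i = (1 - X ^ i)⁻¹ ^ (if Odd i then 2 else 1) := by
  rw [genFunFactor_eq_expand _ hi, mk_oddMultiplicityWeight, map_pow, expand_mk_one]

variable {K : Type*} [Field K]

theorem prod_one_add_X_pow_mul_inv_mul_eq_prod_genFunFactor (n : ℕ) :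
    (∏ i ∈ Icc 1 n, (1 + X ^ i) * (1 - X ^ i)⁻¹) * ∏ i ∈ Ioc n (2 * n), ((1 - X ^ i)⁻¹) ^ 2 =
      ∏ i ∈ Icc 1 (2 * n), genFunFactor (oddMultiplicityWeight K) i := by
  have hfactor : ∀ i ∈ Icc 1 (2 * n), genFunFactor (oddMultiplicityWeight K) i =
      (if Even i then 1 - X ^ i else 1) * ((1 - X ^ i)⁻¹) ^ 2 := by
    intro i hi
    have hi0 : i ≠ 0 := by simp at hi; omega
    rw [genFunFactor_oddMultiplicityWeight K hi0]
    rcases Nat.even_or_odd i with he | ho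
    · rw [if_neg (Nat.not_odd_iff_even.mpr he), if_pos he, sq, ← mul_assoc,
        one_sub_X_pow_mul_inv hi0, one_mul, pow_one]
    · rw [if_pos ho, if_neg (Nat.not_even_iff_odd.mpr ho), one_mul]
  have hsplit : Icc 1 (2 * n) = Icc 1 n ∪ Ioc n (2 * n) := by ext; simp; omega
  have hdisj : Disjoint (Icc 1 n) (Ioc n (2 * n)) :=
    disjoint_left.mpr fun i h1 h2 => by simp at h1 h2; omega
  rw [prod_congr rfl hfactor, prod_mul_distrib (s := Icc 1 (2 * n)), ← prod_filter,
    filter_even_Icc_one_two_mul, prod_image fun a _ b _ h => by simpa using h, hsplit,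
    prod_union hdisj, ← mul_assoc, ← prod_mul_distrib]
  congr 1
  refine prod_congr rfl fun i hi => ?_
  have hinv := one_sub_X_pow_mul_inv (K := K) (i := i) (by simp at hi; omega)
  rw [pow_mul]
  linear_combination (-(1 + X ^ i) * (1 - X ^ i)⁻¹) * hinv

theorem coeff_prod_one_add_X_pow_mul_inv (n : ℕ) :
    coeff n (∏ i ∈ Icc 1 n, (1 + X ^ i) * (1 - X ^ i)⁻¹ : K⟦X⟧) =
      coeff n (genFun (oddMultiplicityWeight K)) := by
  have hf : ∀ i, oddMultiplicityWeight K i 0 = 1 := by simp [oddMultiplicityWeight]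
  have htail : ∏ i ∈ Ioc n (2 * n), ((1 - X ^ i)⁻¹) ^ 2 ≡ 1
      [SMOD Ideal.span {(X : K⟦X⟧) ^ (n + 1)}] := by
    have h := SModEq.prod fun i (hi : i ∈ Ioc n (2 * n)) =>
      (inv_one_sub_X_pow_sModEq_one (K := K) (mem_Ioc.mp hi).1).pow 2
    rwa [prod_congr rfl fun _ _ => one_pow 2, prod_const_one] at h
  rw [coeff_genFun_eq_coeff_prod hf, ← coeff_prod_genFunFactor_eq_of_subset hf
    (s := Icc 1 (2 * n)) (Icc_subset_Icc_right (by omega)) (by simp),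
    ← prod_one_add_X_pow_mul_inv_mul_eq_prod_genFunFactor]
  exact coeff_eq_of_sModEq (by simpa only [mul_one] using (SModEq.refl _).mul htail.symm)

end Nat.Partition

theorem stmt7 (op : ℕ → ℝ) (hop0 : op 0 = 1)
    (hgf : ∀ N : ℕ, 1 ≤ N →
      PowerSeries.coeff (R := ℝ) N
        (∏ n ∈ Finset.Icc 1 N,
          (1 + (PowerSeries.X : PowerSeries ℝ) ^ n) * (1 - PowerSeries.X ^ n)⁻¹) = op N) :
    ∀ n : ℕ, op n =
      ∑ p : Nat.Partition n, ∏ i ∈ (Finset.Icc 1 n).filter (fun i => Odd i),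
        ((p.parts.count i : ℝ) + 1) := by
  intro n
  rcases Nat.eq_zero_or_pos n with rfl | hn
  · simp [hop0]
  rw [← hgf n hn, Nat.Partition.coeff_prod_one_add_X_pow_mul_inv,
    Nat.Partition.coeff_genFun_oddMultiplicityWeight]
end

section
/- Let $c(n)$ be the number of compositions of $n$ (so $c(0)=1$ and $c(n)=2^{n-1}$ for $n\ge 1$). Then $\sum_{n\ge 0} c(n) q^n = \prod_{n\ge 1} (1-q^n)^{-a_n}$ where $a_n = \frac{1}{n} \sum_{d \mid n} \mu(n/d)(2^d - 1)$. -/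
open Finset PowerSeries ArithmeticFunction
open scoped ArithmeticFunction.Moebius

/-- The rising factorial `(a)_k = a(a+1)⋯(a+k-1)`. -/
noncomputable def risingFact (a : ℝ) (k : ℕ) : ℝ := ∏ j ∈ Finset.range k, (a + j)

/-- The binomial-series expansion of `(1-q^n)^{-a n}`. -/
noncomputable def binomFactor (a : ℕ → ℝ) (n : ℕ) : PowerSeries ℝ :=
  PowerSeries.mk fun k =>
    if n ∣ k then risingFact (a n) (k / n) / (Nat.factorial (k / n)) else 0

/-!
Both sides have constant term 1, and a power series with constant term 1 is determined up to
degree `N` by the coefficients of its logarithmic derivative below `N`. The composition series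
is `(1 - q) / (1 - 2q)`, with logarithmic derivative
`2 / (1 - 2q) - 1 / (1 - q) = ∑ (2^(i+1) - 1) q^i`.
The factor `(1 - q^n)^(-a_n)` is `g(q^n)` for `g = ∑ (a_n)_k Y^k / k!`, which solves
`(1 - Y) g' = a_n g`; so its logarithmic derivative is `n a_n q^(n-1) / (1 - q^n)`. Summed over
`n ≤ N`, the coefficient of `q^i` for `i < N` is `∑_{d ∣ i+1} d a_d`, which is `2^(i+1) - 1` by
Möbius inversion.
-/

theorem Derivation.map_prod_eq_sum_mul_prod {R A ι : Type*} [CommRing R] [CommRing A]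
    [Algebra R A] (D : Derivation R A A) (s : Finset ι) (f t : ι → A)
    (h : ∀ i ∈ s, D (f i) = t i * f i) :
    D (∏ i ∈ s, f i) = (∑ i ∈ s, t i) * ∏ i ∈ s, f i := by
  classical
  induction s using Finset.induction_on with
  | empty => simp
  | insert i s hi ih =>
    rw [prod_insert hi, sum_insert hi, D.leibniz, smul_eq_mul, smul_eq_mul,
      h i (mem_insert_self i s), ih fun j hj => h j (mem_insert_of_mem hj)]
    ring

namespace PowerSeries

variable {R : Type*} [CommRing R]

theorem coeff_eq_of_derivative_eq_mul [IsAddTorsionFree R] {F G L M : R⟦X⟧} {N : ℕ}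
    (hF : d⁄dX R F = L * F) (hG : d⁄dX R G = M * G)
    (h0 : constantCoeff F = constantCoeff G) (hLM : ∀ i < N, coeff i L = coeff i M) :
    ∀ k ≤ N, coeff k F = coeff k G := by
  intro k
  induction k using Nat.strong_induction_on with
  | _ k ih =>
    intro hk
    cases k with
    | zero => simpa using h0
    | succ k =>
      refine nsmul_right_injective k.succ_ne_zero ?_
      simp only [nsmul_eq_mul', Nat.cast_succ, ← coeff_derivative, hF, hG, coeff_mul]
      refine sum_congr rfl fun ⟨i, j⟩ hij => ?_
      rw [HasAntidiagonal.mem_antidiagonal] at hij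
      rw [hLM i (by omega), ih j (by omega) (by omega)]

theorem derivative_mk_pow (a : R) :
    d⁄dX R (mk (a ^ ·)) = C a * mk (a ^ ·) * mk (a ^ ·) := by
  ext n
  rw [coeff_derivative, mul_assoc, coeff_C_mul, coeff_mul,
    sum_congr rfl fun x hx => by
      rw [coeff_mk, coeff_mk, ← pow_add, HasAntidiagonal.mem_antidiagonal.mp hx]]
  simp only [coeff_mk, sum_const, Nat.card_antidiagonal, nsmul_eq_mul]
  push_cast
  ring

theorem derivative_one_sub_X_mul_mk_pow (a : R) :
    d⁄dX R ((1 - X) * mk (a ^ ·)) = (C a * mk (a ^ ·) - mk 1) * ((1 - X) * mk (a ^ ·)) := by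
  rw [Derivation.leibniz, derivative_mk_pow, map_sub, Derivation.map_one_eq_zero, derivative_X,
    smul_eq_mul, smul_eq_mul]
  linear_combination (mk (a ^ ·) : R⟦X⟧) * mk_one_mul_one_sub_eq_one (S := R)

theorem derivative_expand (p : ℕ) (hp : p ≠ 0) (f : R⟦X⟧) :
    d⁄dX R (expand p hp f) = expand p hp (d⁄dX R f) * ((p : R⟦X⟧) * X ^ (p - 1)) := by
  rw [expand_apply, expand_apply, derivative_subst (HasSubst.X_pow hp), derivative_pow,
    derivative_X, mul_one]

theorem mk_eq_one_sub_X_mul_mk_two_pow {c : ℕ → R} (hc0 : c 0 = 1)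
    (hc : ∀ n, 1 ≤ n → c n = 2 ^ (n - 1)) :
    mk c = (1 - X) * mk (2 ^ ·) := by
  ext n
  rw [sub_mul, one_mul, map_sub]
  rcases n with _ | n
  · simp [hc0]
  · rw [coeff_succ_X_mul, coeff_mk, coeff_mk, coeff_mk, hc (n + 1) (by omega),
      Nat.add_sub_cancel, pow_succ]
    ring

end PowerSeries

theorem sum_divisors_mul_eq_of_eq_moebius {K : Type*} [Field K] [CharZero K] {a g : ℕ → K}
    (ha : ∀ n, 1 ≤ n → a n = (1 / (n : K)) * ∑ d ∈ n.divisors, (μ (n / d) : K) * g d) :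
    ∀ m > 0, ∑ d ∈ m.divisors, d * a d = g m := by
  refine sum_eq_iff_sum_mul_moebius_eq.mpr fun n hn => ?_
  rw [Nat.sum_divisorsAntidiagonal' (f := fun x y => (μ x : K) * g y), ha n hn]
  have : (n : K) ≠ 0 := Nat.cast_ne_zero.mpr hn.ne'
  field_simp

theorem risingFact_succ (x : ℝ) (k : ℕ) : risingFact x (k + 1) = risingFact x k * (x + k) :=
  prod_range_succ _ _

/-- The binomial series of `(1 - X)^(-x)`. -/
noncomputable def risingFactSeries (x : ℝ) : ℝ⟦X⟧ :=
  mk fun k => risingFact x k / k.factorial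

theorem coeff_risingFactSeries_succ_mul (x : ℝ) (k : ℕ) :
    coeff (k + 1) (risingFactSeries x) * (k + 1) = (x + k) * coeff k (risingFactSeries x) := by
  simp only [risingFactSeries, coeff_mk, risingFact_succ, Nat.factorial_succ]
  push_cast
  field_simp

theorem derivative_risingFactSeries (x : ℝ) :
    d⁄dX ℝ (risingFactSeries x) = C x * PowerSeries.mk 1 * risingFactSeries x := by
  suffices h : (1 - X) * d⁄dX ℝ (risingFactSeries x) = C x * risingFactSeries x by
    rw [mul_comm (C x), mul_assoc, ← h, ← mul_assoc, mk_one_mul_one_sub_eq_one, one_mul]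
  ext k
  rw [sub_mul, one_mul, map_sub, coeff_derivative, coeff_risingFactSeries_succ_mul, coeff_C_mul]
  rcases k with _ | k
  · simp
  · rw [coeff_succ_X_mul, coeff_derivative, Nat.cast_succ]
    ring

theorem binomFactor_eq_expand (a : ℕ → ℝ) {n : ℕ} (hn : n ≠ 0) :
    binomFactor a n = expand n hn (risingFactSeries (a n)) := by
  ext k
  rw [coeff_expand]
  simp [binomFactor, risingFactSeries]

/-- `n x X^(n-1) / (1 - X^n)`, the logarithmic derivative of `(1 - X^n)^(-x)`. -/
noncomputable def binomLogDeriv (x : ℝ) (n : ℕ) : ℝ⟦X⟧ :=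
  mk fun i => if n ∣ i + 1 then n * x else 0

theorem binomLogDeriv_eq_expand {n : ℕ} (hn : n ≠ 0) (x : ℝ) :
    binomLogDeriv x n = C x * expand n hn (PowerSeries.mk 1) * ((n : ℝ⟦X⟧) * X ^ (n - 1)) := by
  rw [show C x * expand n hn (PowerSeries.mk 1) * ((n : ℝ⟦X⟧) * X ^ (n - 1)) =
      C (n * x) * (X ^ (n - 1) * expand n hn (PowerSeries.mk 1)) by
    rw [map_mul, map_natCast]; ring]
  ext i
  rw [coeff_C_mul, coeff_X_pow_mul', binomLogDeriv, coeff_mk]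
  by_cases hi : n - 1 ≤ i
  · obtain ⟨j, rfl⟩ : ∃ j, i = j + (n - 1) := ⟨i - (n - 1), by omega⟩
    rw [if_pos hi, Nat.add_sub_cancel, coeff_expand, show j + (n - 1) + 1 = j + n by omega,
      coeff_mk]
    simp [Nat.dvd_add_self_right]
  · have : ¬ n ∣ i + 1 := fun h => hi (by have := Nat.le_of_dvd i.succ_pos h; omega)
    simp [hi, this]

theorem derivative_binomFactor (a : ℕ → ℝ) {n : ℕ} (hn : n ≠ 0) :
    d⁄dX ℝ (binomFactor a n) = binomLogDeriv (a n) n * binomFactor a n := by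
  rw [binomFactor_eq_expand a hn, derivative_expand, derivative_risingFactSeries, map_mul,
    map_mul, expand_C, binomLogDeriv_eq_expand hn]
  ring

theorem constantCoeff_binomFactor (a : ℕ → ℝ) (n : ℕ) :
    constantCoeff (binomFactor a n) = 1 := by
  simp [← coeff_zero_eq_constantCoeff_apply, binomFactor, risingFact]

theorem coeff_sum_binomLogDeriv (a : ℕ → ℝ) {N i : ℕ} (hi : i < N) :
    coeff i (∑ n ∈ Icc 1 N, binomLogDeriv (a n) n) = ∑ d ∈ (i + 1).divisors, d * a d := by
  simp only [map_sum, binomLogDeriv, coeff_mk, ← sum_filter]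
  congr 1
  ext d
  simp only [mem_filter, mem_Icc, Nat.mem_divisors]
  constructor
  · exact fun h => ⟨h.2, i.succ_ne_zero⟩
  · intro h
    have := Nat.le_of_dvd i.succ_pos h.1
    have := Nat.pos_of_dvd_of_pos h.1 i.succ_pos
    exact ⟨⟨by omega, by omega⟩, h.1⟩

theorem stmt10 (c : ℕ → ℝ) (hc0 : c 0 = 1) (hc : ∀ n : ℕ, 1 ≤ n → c n = 2 ^ (n - 1))
    (a : ℕ → ℝ)
    (ha : ∀ n : ℕ, 1 ≤ n →
      a n = (1 / (n : ℝ)) * ∑ d ∈ n.divisors, (μ (n / d) : ℝ) * (2 ^ d - 1)) :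
    ∀ N : ℕ, PowerSeries.coeff N (∏ n ∈ Finset.Icc 1 N, binomFactor a n) = c N := by
  intro N
  have hc' := mk_eq_one_sub_X_mul_mk_two_pow hc0 hc
  have hprod : d⁄dX ℝ (∏ n ∈ Icc 1 N, binomFactor a n) =
      (∑ n ∈ Icc 1 N, binomLogDeriv (a n) n) * ∏ n ∈ Icc 1 N, binomFactor a n :=
    (d⁄dX ℝ).map_prod_eq_sum_mul_prod _ _ _ fun n hn =>
      derivative_binomFactor a (by rw [mem_Icc] at hn; omega)
  have hdiv := sum_divisors_mul_eq_of_eq_moebius (g := fun d => (2 : ℝ) ^ d - 1) ha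
  suffices coeff N (∏ n ∈ Icc 1 N, binomFactor a n) = coeff N (PowerSeries.mk c) by
    rwa [coeff_mk] at this
  rw [hc']
  refine coeff_eq_of_derivative_eq_mul hprod (derivative_one_sub_X_mul_mk_pow 2) ?_ ?_ N le_rfl
  · rw [← hc', map_prod]
    simp [constantCoeff_binomFactor, hc0]
  · intro i hi
    rw [coeff_sum_binomLogDeriv a hi, hdiv _ i.succ_pos, map_sub, coeff_C_mul, coeff_mk, coeff_mk,
      Pi.one_apply, pow_succ]
    ring
end

section
/- For nonnegative integers $a$ and $|z| < 1$, $|q| < 1$ (or as formal power series in $z$): $\sum_{k=0}^\infty z^k \begin{bmatrix} a - 1 + k \\ k \end{bmatrix}_q = \frac{1}{(z; q)_a}$, where $\begin{bmatrix} n \\ k \end{bmatrix}_q$ is the Gaussian binomial coefficient and $(z;q)_a = \prod_{i=0}^{a-1}(1 - z q^i)$. -/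
open Finset PowerSeries

/-- Finite `q`-Pochhammer symbol `(x; q)_n = ∏_{i=0}^{n-1} (1 - x q^i)` in the field
of rational functions. -/
noncomputable def qPoch (x q : RatFunc ℚ) (n : ℕ) : RatFunc ℚ :=
  ∏ i ∈ Finset.range n, (1 - x * q ^ i)

/-- The Gaussian binomial coefficient `[n k]_q = (q;q)_n / ((q;q)_k (q;q)_{n-k})`,
with `q` the indeterminate of `RatFunc ℚ`. -/
noncomputable def gaussBinom (n k : ℕ) : RatFunc ℚ :=
  if k ≤ n then
    qPoch RatFunc.X RatFunc.X n /
      (qPoch RatFunc.X RatFunc.X k * qPoch RatFunc.X RatFunc.X (n - k))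
  else 0

/-!
The `q`-Pascal rule `[n+k+1, k+1]_q = [n+k, k+1]_q + q^n [n+k, k]_q` says, coefficientwise,
that multiplying the series `∑ₖ [a+k, k]_q zᵏ` by `1 - q^a z` gives `∑ₖ [a-1+k, k]_q zᵏ`.
Induction on `a` then shows that the series times `∏_{i<a} (1 - q^i z)` is `1`.
-/

lemma RatFunc.one_sub_X_pow_succ_ne_zero {K : Type*} [Field K] (n : ℕ) :
    (1 : RatFunc K) - RatFunc.X ^ (n + 1) ≠ 0 := by
  rw [sub_ne_zero]
  intro h
  have hdeg := congrArg RatFunc.intDegree h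
  rw [RatFunc.intDegree_one, ← RatFunc.algebraMap_X, ← map_pow, RatFunc.intDegree_polynomial,
    Polynomial.natDegree_X_pow] at hdeg
  omega

lemma qPoch_zero (x q : RatFunc ℚ) : qPoch x q 0 = 1 :=
  prod_range_zero _

lemma qPoch_X_X_succ (n : ℕ) :
    qPoch RatFunc.X RatFunc.X (n + 1) =
      qPoch RatFunc.X RatFunc.X n * (1 - RatFunc.X ^ (n + 1)) := by
  rw [qPoch, prod_range_succ, ← pow_succ']
  rfl

lemma qPoch_X_X_ne_zero (n : ℕ) : qPoch RatFunc.X RatFunc.X n ≠ 0 :=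
  prod_ne_zero_iff.mpr fun i _ => by
    simpa only [pow_succ'] using RatFunc.one_sub_X_pow_succ_ne_zero (K := ℚ) i

lemma gaussBinom_of_add_eq {n k m : ℕ} (h : m + k = n) :
    gaussBinom n k = qPoch RatFunc.X RatFunc.X n /
      (qPoch RatFunc.X RatFunc.X k * qPoch RatFunc.X RatFunc.X m) := by
  rw [gaussBinom, if_pos (h ▸ Nat.le_add_left k m), ← h, Nat.add_sub_cancel]

lemma gaussBinom_zero_right (n : ℕ) : gaussBinom n 0 = 1 := by
  rw [gaussBinom_of_add_eq (add_zero n), qPoch_zero, one_mul, div_self (qPoch_X_X_ne_zero n)]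

lemma gaussBinom_self (n : ℕ) : gaussBinom n n = 1 := by
  rw [gaussBinom_of_add_eq (m := 0) (zero_add n), qPoch_zero, mul_one,
    div_self (qPoch_X_X_ne_zero n)]

lemma gaussBinom_eq_zero_of_lt {n k : ℕ} (h : n < k) : gaussBinom n k = 0 :=
  if_neg (Nat.not_le.mpr h)

lemma gaussBinom_succ_succ (n k : ℕ) :
    gaussBinom (n + k + 1) (k + 1) =
      gaussBinom (n + k) (k + 1) + RatFunc.X ^ n * gaussBinom (n + k) k := by
  rcases n with _ | m
  · simp only [zero_add, gaussBinom_self, gaussBinom_eq_zero_of_lt (Nat.lt_succ_self k), pow_zero,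
      one_mul]
  · rw [gaussBinom_of_add_eq (n := m + 1 + k + 1) (m := m + 1) (by omega),
      gaussBinom_of_add_eq (n := m + 1 + k) (k := k + 1) (m := m) (by omega),
      gaussBinom_of_add_eq (n := m + 1 + k) (k := k) (m := m + 1) rfl,
      qPoch_X_X_succ (m + 1 + k), qPoch_X_X_succ k, qPoch_X_X_succ m]
    have := qPoch_X_X_ne_zero k
    have := qPoch_X_X_ne_zero m
    have := RatFunc.one_sub_X_pow_succ_ne_zero (K := ℚ) k
    have := RatFunc.one_sub_X_pow_succ_ne_zero (K := ℚ) m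
    field_simp
    ring

/-- For `a = 0` the truncated index `k - 1 < k` makes every coefficient past the first vanish. -/
noncomputable def gaussSeries (a : ℕ) : PowerSeries (RatFunc ℚ) :=
  PowerSeries.mk fun k => gaussBinom (a + k - 1) k

lemma gaussSeries_zero : gaussSeries 0 = 1 := by
  ext (_ | k)
  · simp [gaussSeries, gaussBinom_zero_right]
  · simp [gaussSeries, coeff_one, gaussBinom_eq_zero_of_lt (Nat.lt_succ_self k)]

lemma gaussSeries_succ_mul (a : ℕ) :
    gaussSeries (a + 1) * (1 - C (RatFunc.X ^ a) * X) = gaussSeries a := by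
  ext (_ | k)
  · simp [gaussSeries, gaussBinom_zero_right]
  · rw [mul_sub, mul_one, map_sub, mul_left_comm, coeff_C_mul, coeff_succ_mul_X]
    simp only [gaussSeries, coeff_mk]
    rw [show a + 1 + (k + 1) - 1 = a + k + 1 by omega, show a + 1 + k - 1 = a + k by omega,
      show a + (k + 1) - 1 = a + k by omega, gaussBinom_succ_succ]
    ring

lemma gaussSeries_mul_prod_eq_one (a : ℕ) :
    gaussSeries a * ∏ i ∈ range a, (1 - C (RatFunc.X ^ i) * X) = 1 := by
  induction a with
  | zero => rw [prod_range_zero, mul_one, gaussSeries_zero]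
  | succ a ih => rw [prod_range_succ, mul_left_comm, gaussSeries_succ_mul, mul_comm, ih]

theorem stmt16 (a : ℕ) :
    (PowerSeries.mk fun k => gaussBinom (a + k - 1) k : PowerSeries (RatFunc ℚ)) =
      (∏ i ∈ Finset.range a,
        (1 - PowerSeries.C (RatFunc.X ^ i : RatFunc ℚ) * PowerSeries.X))⁻¹ := by
  rw [PowerSeries.eq_inv_iff_mul_eq_one]
  · exact gaussSeries_mul_prod_eq_one a
  · simp [map_prod]
end
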